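/- arXiv:1912.08600 — 2 statements merged into one kernel-verified Lean document; each statement's English description precedes it below -/
import Mathlib

section
/- Let G : ℝ → ℝ be infinitely differentiable and let u : ℝ → ℝ be infinitely differentiable on a neighborhood of a point a ∈ ℝ, satisfying u''(s) = G(u(s)) for all s in that neighborhood and u'(a) = 0. Then every odd-order derivative of u vanishes at a; that is, for every natural number p, the iterated derivative of u of order 2p+1 at a equals 0. -/
/-- On an open set, `iteratedDerivWithin` agrees with `iteratedDeriv`. -/
lemma myIteratedDerivWithin_of_isOpen {f : ℝ → ℝ} {s : Set ℝ} (hs : IsOpen s)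
    {x : ℝ} (hx : x ∈ s) (n : ℕ) :
    iteratedDerivWithin n f s x = iteratedDeriv n f x := by
  rw [iteratedDerivWithin_eq_iteratedFDerivWithin, iteratedDeriv_eq_iteratedFDeriv,
    iteratedFDerivWithin_of_isOpen n hs hx]

/-- Pointwise additivity of `iteratedDeriv` for functions smooth on an open set. -/
lemma myIteratedDeriv_add (f g : ℝ → ℝ) {s : Set ℝ} (hs : IsOpen s)
    {x : ℝ} (hx : x ∈ s) (n : ℕ) (hf : ContDiffOn ℝ (⊤ : ℕ∞) f s) (hg : ContDiffOn ℝ (⊤ : ℕ∞) g s) :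
    iteratedDeriv n (f + g) x = iteratedDeriv n f x + iteratedDeriv n g x := by
  rw [← myIteratedDerivWithin_of_isOpen hs hx n, ← myIteratedDerivWithin_of_isOpen hs hx n,
    ← myIteratedDerivWithin_of_isOpen hs hx n,
    iteratedDerivWithin_add hx hs.uniqueDiffOn ((hf.of_le (by exact_mod_cast le_top)) x hx) ((hg.of_le (by exact_mod_cast le_top)) x hx)]

/-- Parity lemma for products: if all derivatives of `f` of parity `i` vanish at `a`
(up to order `n`), all derivatives of `g` of parity `j` vanish at `a` (up to order `n`),
and `n` has parity `i + j + 1`, then the `n`-th derivative of `f * g` vanishes at `a`. -/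
lemma mul_parity_vanish {s : Set ℝ} (hs : IsOpen s) {a : ℝ} (ha : a ∈ s) :
    ∀ (n : ℕ) (f g : ℝ → ℝ) (i j : ℕ), ContDiffOn ℝ (⊤ : ℕ∞) f s → ContDiffOn ℝ (⊤ : ℕ∞) g s →
    (∀ m ≤ n, m % 2 = i % 2 → iteratedDeriv m f a = 0) →
    (∀ m ≤ n, m % 2 = j % 2 → iteratedDeriv m g a = 0) →
    n % 2 = (i + j + 1) % 2 → iteratedDeriv n (f * g) a = 0 := by
  intro n
  induction n with
  | zero =>
    intro f g i j hf hg hfv hgv hpar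
    simp only [iteratedDeriv_zero, Pi.mul_apply]
    rcases Nat.mod_two_eq_zero_or_one i with hi | hi
    · have : iteratedDeriv 0 f a = 0 := hfv 0 le_rfl (by omega)
      simp only [iteratedDeriv_zero] at this
      rw [this, zero_mul]
    · have : iteratedDeriv 0 g a = 0 := hgv 0 le_rfl (by omega)
      simp only [iteratedDeriv_zero] at this
      rw [this, mul_zero]
  | succ n ih =>
    intro f g i j hf hg hfv hgv hpar
    have hdf : DifferentiableOn ℝ f s := hf.differentiableOn (by simp)
    have hdg : DifferentiableOn ℝ g s := hg.differentiableOn (by simp)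
    have hev : deriv (f * g) =ᶠ[nhds a] (deriv f * g + f * deriv g) := by
      filter_upwards [hs.mem_nhds ha] with x hx
      have h1 : DifferentiableAt ℝ f x := hdf.differentiableAt (hs.mem_nhds hx)
      have h2 : DifferentiableAt ℝ g x := hdg.differentiableAt (hs.mem_nhds hx)
      have : deriv (fun y => f y * g y) x = deriv f x * g x + f x * deriv g x :=
        deriv_mul h1 h2
      simpa [Pi.mul_def, Pi.add_def] using this
    rw [iteratedDeriv_succ', hev.iteratedDeriv_eq n]
    have hf' : ContDiffOn ℝ (⊤ : ℕ∞) (deriv f) s := hf.deriv_of_isOpen hs (by simp)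
    have hg' : ContDiffOn ℝ (⊤ : ℕ∞) (deriv g) s := hg.deriv_of_isOpen hs (by simp)
    rw [myIteratedDeriv_add (deriv f * g) (f * deriv g) hs ha n (hf'.mul hg) (hf.mul hg')]
    have t1 : iteratedDeriv n (deriv f * g) a = 0 := by
      refine ih (deriv f) g (i + 1) j hf' hg ?_ ?_ (by omega)
      · intro m hm hmp
        rw [← iteratedDeriv_succ']
        exact hfv (m + 1) (by omega) (by omega)
      · intro m hm hmp
        exact hgv m (by omega) hmp
    have t2 : iteratedDeriv n (f * deriv g) a = 0 := by
      refine ih f (deriv g) i (j + 1) hf hg' ?_ ?_ (by omega)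
      · intro m hm hmp
        exact hfv m (by omega) hmp
      · intro m hm hmp
        rw [← iteratedDeriv_succ']
        exact hgv (m + 1) (by omega) (by omega)
    rw [t1, t2, add_zero]

/-- Composition lemma: if all odd derivatives of `u` up to order `m` vanish at `a`,
then the `m`-th derivative of `φ ∘ u` vanishes at `a` for odd `m`, for smooth `φ`. -/
lemma comp_odd_vanish {s : Set ℝ} (hs : IsOpen s) {a : ℝ} (ha : a ∈ s)
    {u : ℝ → ℝ} (hu : ContDiffOn ℝ (⊤ : ℕ∞) u s) :
    ∀ (m : ℕ) (φ : ℝ → ℝ), ContDiff ℝ (⊤ : ℕ∞) φ →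
    (∀ k ≤ m, k % 2 = 1 → iteratedDeriv k u a = 0) →
    m % 2 = 1 → iteratedDeriv m (φ ∘ u) a = 0 := by
  intro m
  induction m using Nat.strong_induction_on with
  | _ m ih =>
    intro φ hφ huv hm
    obtain ⟨m', rfl⟩ : ∃ m', m = m' + 1 := ⟨m - 1, by omega⟩
    have hdu : DifferentiableOn ℝ u s := hu.differentiableOn (by simp)
    have hφ' : ContDiff ℝ (⊤ : ℕ∞) (deriv φ) := by
      have h' : ContDiff ℝ (((⊤ : ℕ∞) : WithTop ℕ∞) + 1) φ := by exact hφ.of_le (by exact_mod_cast le_top)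
      exact (contDiff_succ_iff_deriv.mp h').2.2
    have hev : deriv (φ ∘ u) =ᶠ[nhds a] ((deriv φ ∘ u) * deriv u) := by
      filter_upwards [hs.mem_nhds ha] with x hx
      have h1 : DifferentiableAt ℝ u x := hdu.differentiableAt (hs.mem_nhds hx)
      have h2 : DifferentiableAt ℝ φ (u x) := hφ.differentiable (by simp) (u x)
      simp [Function.comp, Pi.mul_def, deriv_comp x h2 h1]
    rw [iteratedDeriv_succ', hev.iteratedDeriv_eq m']
    refine mul_parity_vanish hs ha m' (deriv φ ∘ u) (deriv u) 1 0
      (hφ'.comp_contDiffOn hu) (hu.deriv_of_isOpen hs (by simp)) ?_ ?_ (by omega)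
    · intro k hk hkp
      exact ih k (by omega) (deriv φ) hφ' (fun l hl hlp => huv l (by omega) hlp) hkp
    · intro k hk hkp
      rw [← iteratedDeriv_succ']
      exact huv (k + 1) (by omega) (by omega)

/-- If `G` is smooth, `u` is smooth on an open neighborhood of `a`, satisfies
`u'' = G ∘ u` there, and `u' a = 0`, then every odd-order derivative of `u`
vanishes at `a`. -/
theorem odd_derivs_vanish (G u : ℝ → ℝ) (a : ℝ) (s : Set ℝ)
    (hs : IsOpen s) (ha : a ∈ s)
    (hG : ContDiff ℝ (⊤ : ℕ∞) G) (hu : ContDiffOn ℝ (⊤ : ℕ∞) u s)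
    (hode : ∀ x ∈ s, deriv (deriv u) x = G (u x))
    (h0 : deriv u a = 0) :
    ∀ p : ℕ, iteratedDeriv (2 * p + 1) u a = 0 := by
  have main : ∀ n : ℕ, n % 2 = 1 → iteratedDeriv n u a = 0 := by
    intro n
    induction n using Nat.strong_induction_on with
    | _ n ih =>
      intro hn
      rcases eq_or_ne n 1 with rfl | hne
      · rwa [iteratedDeriv_one]
      · obtain ⟨m, rfl⟩ : ∃ m, n = m + 2 := ⟨n - 2, by omega⟩
        have hev : deriv (deriv u) =ᶠ[nhds a] (G ∘ u) := by
          filter_upwards [hs.mem_nhds ha] with x hx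
          exact hode x hx
        have : iteratedDeriv (m + 2) u a = iteratedDeriv m (deriv (deriv u)) a := by
          rw [iteratedDeriv_succ', iteratedDeriv_succ']
        rw [this, hev.iteratedDeriv_eq m]
        exact comp_odd_vanish hs ha hu m G hG
          (fun k hk hkp => ih k (by omega) hkp) (by omega)
  intro p
  exact main (2 * p + 1) (by omega)
end

section
/- Let Λ > 0, m > 0 and Q ≠ 0 be real numbers. Suppose the quartic polynomial p(X) = (Λ/3)X⁴ − X² + 2mX − Q² has four distinct real roots, i.e. p(X) = (Λ/3)(X − r₁)(X − r₂)(X − r₃)(X − r₄) with r₁ < r₂ < r₃ < r₄. Then exactly one of the roots is negative and the other three are positive; that is, r₁ < 0 < r₂. -/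
/-- If the quartic `(Λ/3)X⁴ − X² + 2mX − Q²` (with `Λ, m > 0`, `Q ≠ 0`) has four distinct
real roots `r₁ < r₂ < r₃ < r₄`, then exactly one root is negative: `r₁ < 0 < r₂`. -/
theorem quartic_one_negative_root (Λ m Q r₁ r₂ r₃ r₄ : ℝ)
    (hΛ : 0 < Λ) (hm : 0 < m) (hQ : Q ≠ 0)
    (h12 : r₁ < r₂) (h23 : r₂ < r₃) (h34 : r₃ < r₄)
    (hfac : ∀ X : ℝ, Λ / 3 * X ^ 4 - X ^ 2 + 2 * m * X - Q ^ 2 =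
      Λ / 3 * (X - r₁) * (X - r₂) * (X - r₃) * (X - r₄)) :
    r₁ < 0 ∧ 0 < r₂ := by
  -- Vieta: product of roots
  have he4 : Λ / 3 * (r₁ * r₂ * r₃ * r₄) = -Q ^ 2 := by
    linear_combination - hfac 0
  -- Vieta: sum of roots is 0
  have he1 : Λ / 3 * (r₁ + r₂ + r₃ + r₄) = 0 := by
    linear_combination (1/12) * hfac 2 - (1/12) * hfac (-2) - (1/6) * hfac 1 + (1/6) * hfac (-1)
  -- Vieta: sum of triple products
  have he3 : Λ / 3 * (r₁*r₂*r₃ + r₁*r₂*r₄ + r₁*r₃*r₄ + r₂*r₃*r₄) = -(2*m) := by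
    linear_combination (2/3) * hfac 1 - (2/3) * hfac (-1) - (1/12) * hfac 2 + (1/12) * hfac (-2)
  have hQ2 : 0 < Q ^ 2 := by positivity
  have hprod : r₁ * r₂ * r₃ * r₄ < 0 := by nlinarith
  have hsum : r₁ + r₂ + r₃ + r₄ = 0 := by
    have h3 : Λ / 3 ≠ 0 := by positivity
    exact (mul_eq_zero.mp he1).resolve_left h3
  have h1 : r₁ < 0 := by nlinarith
  refine ⟨h1, ?_⟩
  by_contra h
  push_neg at h
  -- r₂ ≤ 0; r₂ ≠ 0 since product ≠ 0, so r₂ < 0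
  have h2 : r₂ < 0 := by
    rcases lt_or_eq_of_le h with h' | h'
    · exact h'
    · exfalso; rw [h'] at hprod; simp at hprod
  -- then r₃ < 0 < r₄ or all nonneg products contradiction
  have h3 : r₃ < 0 := by
    by_contra hc
    push_neg at hc
    have h4 : (0:ℝ) ≤ r₄ := by linarith
    nlinarith [mul_pos (neg_pos.mpr h1) (neg_pos.mpr h2), mul_nonneg hc h4]
  have h4 : 0 < r₄ := by linarith [hsum]
  have he3' : r₁*r₂*r₃ + r₁*r₂*r₄ + r₁*r₃*r₄ + r₂*r₃*r₄ < 0 := by nlinarith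
  -- with a=-r₁,b=-r₂,c=-r₃ positive and r₄=a+b+c, e₃ > 0, contradiction
  nlinarith [mul_pos (mul_pos (neg_pos.mpr h1) (neg_pos.mpr h2)) (neg_pos.mpr h3),
    mul_pos (neg_pos.mpr h1) (neg_pos.mpr h2),
    mul_pos (neg_pos.mpr h1) (neg_pos.mpr h3),
    mul_pos (neg_pos.mpr h2) (neg_pos.mpr h3),
    sq_nonneg (r₁ - r₂), sq_nonneg (r₂ - r₃), sq_nonneg (r₁ - r₃)]
end
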